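/- Let φ be a primitive well-marked morphism over a finite alphabet A with Fst(φ_L) = Lst(φ_R) = Id, let u be a palindromic fixed point of φ, let w be the conjugate word of the relation φ_L ▷ φ_R, and define Φ : A* → A* by Φ(x) = φ_R(x)w. Then for every x ∈ L(u), the word Φ(x) belongs to L(u). -/

import Mathlib

namespace ZDC

variable {A : Type*}

/-- The finite word `u_i u_{i+1} ⋯ u_{i+n-1}` occurring at position `i` in `u`. -/
def factorAt (u : ℕ → A) (i n : ℕ) : List A := (List.range n).map (fun j => u (i + j))

/-- `w` occurs at index `i` in the infinite word `u`. -/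
def OccursAt (u : ℕ → A) (w : List A) (i : ℕ) : Prop := w = factorAt u i w.length

/-- The language of the infinite word `u`: the set of its factors. -/
def Lang (u : ℕ → A) : Set (List A) := {w | ∃ i, OccursAt u w i}

/-- The language of `u` is closed under reversal. -/
def ClosedUnderReversal (u : ℕ → A) : Prop := ∀ w ∈ Lang u, w.reverse ∈ Lang u

/-- Number of distinct palindromic factors of a finite word (the empty word counts). -/
noncomputable def palCount (w : List A) : ℕ := {v : List A | v <:+: w ∧ v.reverse = v}.ncard

/-- Palindromic defect of a finite word: `|w| + 1 - p(w)`. -/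
noncomputable def wordDefect (w : List A) : ℕ := w.length + 1 - palCount w

/-- Palindromic defect of an infinite word: sup of defects of its factors, in `ℕ∞`. -/
noncomputable def Defect (u : ℕ → A) : ℕ∞ := ⨆ w ∈ Lang u, (wordDefect w : ℕ∞)

/-- `u` contains infinitely many palindromic factors. -/
def Palindromic (u : ℕ → A) : Prop := ∀ N, ∃ w ∈ Lang u, N ≤ w.length ∧ w.reverse = w

/-- `u` is (purely) periodic: `u = zzz⋯` for a nonempty `z`. -/
def Periodic (u : ℕ → A) : Prop := ∃ p, 0 < p ∧ ∀ n, u (n + p) = u n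

/-- `u` is eventually periodic: `u = v zzz⋯`. -/
def EventuallyPeriodic (u : ℕ → A) : Prop := ∃ p, 0 < p ∧ ∃ N, ∀ n ≥ N, u (n + p) = u n

/-- `r` is a complete return word to `w` in `u`: it stretches from one occurrence of `w`
to the next one (inclusively). -/
def IsCompleteReturn (u : ℕ → A) (w r : List A) : Prop :=
  ∃ i j, i < j ∧ OccursAt u w i ∧ OccursAt u w j ∧
    (∀ k, i < k → k < j → ¬ OccursAt u w k) ∧
    r = factorAt u i (j + w.length - i)

/-- `c` is a complete mirror return to `w` in `u`. -/
def IsCompleteMirrorReturn (u : ℕ → A) (w c : List A) : Prop :=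
  c ∈ Lang u ∧
  ¬ w <:+: (c.drop 1).dropLast ∧ ¬ w.reverse <:+: (c.drop 1).dropLast ∧
  ((w <+: c ∧ w.reverse <:+ c) ∨ (w.reverse <+: c ∧ w <:+ c))

/-- Occurrences of `w` and its reversal alternate in `u`. -/
def Alternate (u : ℕ → A) (w : List A) : Prop :=
  (∀ i j, i < j → OccursAt u w i → OccursAt u w j →
    (∀ k, i < k → k < j → ¬ OccursAt u w k) →
    ∃ k, i ≤ k ∧ k ≤ j ∧ OccursAt u w.reverse k) ∧
  (∀ i j, i < j → OccursAt u w.reverse i → OccursAt u w.reverse j →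
    (∀ k, i < k → k < j → ¬ OccursAt u w.reverse k) →
    ∃ k, i ≤ k ∧ k ≤ j ∧ OccursAt u w k)

/-- Left extensions `E⁻(w)`. -/
def Eminus (u : ℕ → A) (w : List A) : Set A := {a | a :: w ∈ Lang u}

/-- Right extensions `E⁺(w)`. -/
def Eplus (u : ℕ → A) (w : List A) : Set A := {b | w ++ [b] ∈ Lang u}

/-- Bilateral extensions `E(w)`. -/
def Eboth (u : ℕ → A) (w : List A) : Set (A × A) := {p | p.1 :: (w ++ [p.2]) ∈ Lang u}

/-- Symmetric bilateral extensions `E⁼(w)`. -/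
def Esym (u : ℕ → A) (w : List A) : Set A := {a | a :: (w ++ [a]) ∈ Lang u}

/-- Bilateral multiplicity `m(w) = #E(w) − #E⁺(w) − #E⁻(w) + 1`. -/
noncomputable def mult (u : ℕ → A) (w : List A) : ℤ :=
  ((Eboth u w).ncard : ℤ) - (Eplus u w).ncard - (Eminus u w).ncard + 1

/-- `w` is a bispecial factor of `u`. -/
def Bispecial (u : ℕ → A) (w : List A) : Prop :=
  2 ≤ (Eminus u w).ncard ∧ 2 ≤ (Eplus u w).ncard

/-- The bipartite extension graph `Γ(w)` with vertex set `E⁻(w) ⊔ E⁺(w)`. -/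
def GammaGraph (u : ℕ → A) (w : List A) : SimpleGraph (↥(Eminus u w) ⊕ ↥(Eplus u w)) :=
  SimpleGraph.fromRel (fun x y =>
    ∃ (a : ↥(Eminus u w)) (b : ↥(Eplus u w)),
      x = Sum.inl a ∧ y = Sum.inr b ∧ ((a : A), (b : A)) ∈ Eboth u w)

/-- The graph `Θ(w)` on the vertex set `E⁻(w)` for a palindrome `w`. -/
def ThetaGraph (u : ℕ → A) (w : List A) : SimpleGraph (↥(Eminus u w)) :=
  SimpleGraph.fromRel (fun a b => ((a : A), (b : A)) ∈ Eboth u w)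

/-- Factor complexity `C(n)`. -/
noncomputable def complexity (u : ℕ → A) (n : ℕ) : ℕ :=
  {w ∈ Lang u | w.length = n}.ncard

/-- Palindromic complexity `P(n)`. -/
noncomputable def palComplexity (u : ℕ → A) (n : ℕ) : ℕ :=
  {w ∈ Lang u | w.length = n ∧ w.reverse = w}.ncard

/-- Extension of a morphism (given by its letter images) to finite words. -/
def Apply (φ : A → List A) (x : List A) : List A := x.flatMap φ

/-- A morphism is primitive if some power maps each letter to a word containing all letters. -/
def Primitive (φ : A → List A) : Prop :=
  ∃ k, 1 ≤ k ∧ ∀ a b : A, b ∈ (Apply φ)^[k] [a]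

/-- `u` is a fixed point of `φ`: the image of every prefix of `u` is again a prefix of `u`. -/
def IsFixedPoint (φ : A → List A) (u : ℕ → A) : Prop :=
  ∀ n, Apply φ (factorAt u 0 n) = factorAt u 0 (Apply φ (factorAt u 0 n)).length

/-- `ψ ▷ φ`: `ψ` is a left conjugate of `φ` with conjugate word `w`,
i.e. `φ(a)w = wψ(a)` for every letter `a`. -/
def LeftConj (ψ φ : A → List A) (w : List A) : Prop :=
  ∀ a, φ a ++ w = w ++ ψ a

/-- A morphism is cyclic if all images of letters are powers of a common word. -/
def Cyclic (φ : A → List A) : Prop :=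
  ∃ w : List A, ∀ a, ∃ k : ℕ, φ a = (List.replicate k w).flatten

/-- First letter (as an `Option`) of the image of a letter. -/
def Fst (φ : A → List A) : A → Option A := fun a => (φ a).head?

/-- Last letter (as an `Option`) of the image of a letter. -/
def Lst (φ : A → List A) : A → Option A := fun a => (φ a).getLast?

/-- `φL` is the leftmost conjugate of `φ`: a left conjugate whose first-letter map
is not constant. -/
def IsLeftmostConj (φL φ : A → List A) : Prop :=
  (∃ w, LeftConj φL φ w) ∧ ¬ (∀ a b, Fst φL a = Fst φL b)

/-- `φR` is the rightmost conjugate of `φ`: a right conjugate whose last-letter map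
is not constant. -/
def IsRightmostConj (φR φ : A → List A) : Prop :=
  (∃ w, LeftConj φ φR w) ∧ ¬ (∀ a b, Lst φR a = Lst φR b)

/-- A marked morphism: acyclic, and the first-letter map of its leftmost conjugate and
the last-letter map of its rightmost conjugate are injective. -/
def Marked (φ : A → List A) : Prop :=
  ¬ Cyclic φ ∧
  (∃ φL, IsLeftmostConj φL φ ∧ Function.Injective (Fst φL)) ∧
  (∃ φR, IsRightmostConj φR φ ∧ Function.Injective (Lst φR))

end ZDC

/-!
The conjugate words `wR` of `φ ▷ φR` and `wL` of `φL ▷ φ` concatenate to a conjugate word of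
`φL ▷ φR`, and non-constancy of `Fst φL` makes that word unique, so `w = wR wL` and
`Φ(x) = φR(x) wR wL = wR φ(x) wL`. Because `u` is a fixed point of a primitive morphism, `x`
occurs arbitrarily far to the right, so `z x z' ∈ L(u)` for some `z`, `z'` with `|z| = |wR|`
and `|z'| = |wL|`. The conjugacy relations force `wR` to be a suffix of `φ(z)` and `wL` a
prefix of `φ(z')`, hence `wR φ(x) wL` is a factor of `φ(z x z') ∈ L(u)`.
-/

section

variable {α : Type*}

lemma List.prefix_of_append_eq {a b v : List α} (h : a ++ v = v ++ b)
    (hlen : v.length ≤ a.length) : v <+: a :=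
  List.prefix_of_prefix_length_le (h ▸ List.prefix_append v b) (List.prefix_append a v) hlen

lemma List.suffix_of_append_eq {a b v : List α} (h : a ++ v = v ++ b)
    (hlen : v.length ≤ b.length) : v <:+ b :=
  List.suffix_of_suffix_length_le (h ▸ List.suffix_append a v) (List.suffix_append v b) hlen

end

namespace ZDC

variable {A : Type*}

section Occurrences

variable {u : ℕ → A}

@[simp]
lemma length_factorAt (u : ℕ → A) (i n : ℕ) : (factorAt u i n).length = n := by
  simp [factorAt]

lemma factorAt_add (u : ℕ → A) (i m n : ℕ) :
    factorAt u i (m + n) = factorAt u i m ++ factorAt u (i + m) n := by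
  simp [factorAt, List.range_add, Function.comp_def, add_assoc]

lemma occursAt_factorAt (u : ℕ → A) (i n : ℕ) : OccursAt u (factorAt u i n) i := by
  simp [OccursAt]

lemma occursAt_iff {v : List A} {i : ℕ} :
    OccursAt u v i ↔ ∀ j (hj : j < v.length), u (i + j) = v[j] := by
  simp [OccursAt, factorAt, List.ext_getElem_iff, eq_comm]

lemma occursAt_append_iff {s v : List A} {i : ℕ} :
    OccursAt u (s ++ v) i ↔ OccursAt u s i ∧ OccursAt u v (i + s.length) := by
  simp only [OccursAt, List.length_append, factorAt_add]
  exact ⟨fun h => List.append_inj h (length_factorAt u i _).symm,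
    fun ⟨hs, hv⟩ => by rw [← hs, ← hv]⟩

lemma occursAt_singleton_iff {a : A} {i : ℕ} : OccursAt u [a] i ↔ u i = a := by
  simp [occursAt_iff]

lemma OccursAt.shift {v x : List A} {p q i : ℕ} (hp : OccursAt u v p) (hq : OccursAt u v q)
    (hx : OccursAt u x (p + i)) (hlen : i + x.length ≤ v.length) : OccursAt u x (q + i) := by
  rw [occursAt_iff] at *
  intro j hj
  rw [← hx j hj, add_assoc, add_assoc, hq _ (by omega), hp _ (by omega)]

lemma mem_lang_of_infix {x v : List A} (hx : x ∈ Lang u) (hv : v <:+: x) : v ∈ Lang u := by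
  obtain ⟨i, hi⟩ := hx
  obtain ⟨s, t, rfl⟩ := hv
  exact ⟨i + s.length, (occursAt_append_iff.1 (occursAt_append_iff.1 hi).1).2⟩

lemma OccursAt.exists_append_append_mem_lang {x : List A} {i : ℕ} (hx : OccursAt u x i) (m n : ℕ)
    (hm : m ≤ i) : ∃ z z' : List A, z.length = m ∧ z'.length = n ∧ z ++ x ++ z' ∈ Lang u := by
  refine ⟨factorAt u (i - m) m, factorAt u (i + x.length) n, length_factorAt .., length_factorAt ..,
    i - m, ?_⟩
  have him : i - m + m = i := by omega
  have hix : i - m + (m + x.length) = i + x.length := by omega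
  simp only [occursAt_append_iff, List.length_append, length_factorAt, him, hix]
  exact ⟨⟨occursAt_factorAt .., hx⟩, occursAt_factorAt ..⟩

end Occurrences

section Morphisms

variable {φ ψ χ : A → List A}

@[simp]
lemma apply_nil (φ : A → List A) : Apply φ [] = [] := rfl

@[simp]
lemma apply_cons (φ : A → List A) (a : A) (x : List A) :
    Apply φ (a :: x) = φ a ++ Apply φ x := rfl

@[simp]
lemma apply_append (φ : A → List A) (x y : List A) :
    Apply φ (x ++ y) = Apply φ x ++ Apply φ y := List.flatMap_append

lemma apply_singleton (φ : A → List A) (a : A) : Apply φ [a] = φ a := by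
  simp

lemma iterate_apply (φ : A → List A) (k : ℕ) :
    (Apply φ)^[k] = Apply (fun a => (Apply φ)^[k] [a]) := by
  induction k with
  | zero => funext x; simp [Apply]
  | succ k ih =>
    funext x
    rw [Function.iterate_succ_apply', congrFun ih x]
    simp only [Apply, List.flatMap_assoc, Function.iterate_succ_apply']

@[simp]
lemma iterate_apply_append (φ : A → List A) (k : ℕ) (x y : List A) :
    (Apply φ)^[k] (x ++ y) = (Apply φ)^[k] x ++ (Apply φ)^[k] y := by
  rw [iterate_apply]
  exact apply_append ..

lemma mul_length_le_length_apply {m : ℕ} (h : ∀ a, m ≤ (φ a).length) (x : List A) :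
    m * x.length ≤ (Apply φ x).length := by
  induction x with
  | nil => simp
  | cons a x ih =>
    simp only [apply_cons, List.length_append, List.length_cons, mul_add, mul_one]
    have := h a
    omega

lemma length_le_length_apply (h : ∀ a, φ a ≠ []) (x : List A) :
    x.length ≤ (Apply φ x).length := by
  simpa using mul_length_le_length_apply (m := 1) (fun a => List.length_pos_iff.2 (h a)) x

lemma LeftConj.apply {v : List A} (h : LeftConj ψ φ v) (x : List A) :
    Apply φ x ++ v = v ++ Apply ψ x := by
  induction x with
  | nil => simp
  | cons a x ih =>
    rw [apply_cons, apply_cons, List.append_assoc, ih, ← List.append_assoc, h a,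
      List.append_assoc]

lemma LeftConj.length_eq {v : List A} (h : LeftConj ψ φ v) (a : A) :
    (ψ a).length = (φ a).length := by
  have := congrArg List.length (h a)
  simp only [List.length_append] at this
  omega

lemma LeftConj.trans {v v' : List A} (h : LeftConj ψ φ v) (h' : LeftConj χ ψ v') :
    LeftConj χ φ (v ++ v') := by
  intro a
  rw [← List.append_assoc, h a, List.append_assoc, h' a, List.append_assoc]

end Morphisms

section Primitive

variable {φ : A → List A}

lemma Primitive.apply_ne_nil (hprim : Primitive φ) (a : A) : φ a ≠ [] := by
  obtain ⟨k, hk1, hk⟩ := hprim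
  obtain ⟨k, rfl⟩ := Nat.exists_eq_add_of_le' hk1
  intro ha
  have := hk a a
  rw [Function.iterate_succ_apply, apply_singleton, ha, iterate_apply] at this
  simp at this

lemma two_le_length_of_forall_mem [Nontrivial A] {l : List A} (h : ∀ b, b ∈ l) :
    2 ≤ l.length := by
  classical
  obtain ⟨b, c, hbc⟩ := exists_pair_ne A
  calc 2 = ({b, c} : Finset A).card := (Finset.card_pair hbc).symm
    _ ≤ l.toFinset.card := Finset.card_le_card fun x _ => List.mem_toFinset.2 (h x)
    _ ≤ l.length := l.toFinset_card_le

lemma Primitive.exists_le_length_iterate [Nontrivial A] (hprim : Primitive φ) (N : ℕ) :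
    ∃ j, ∀ a, N ≤ ((Apply φ)^[j] [a]).length := by
  obtain ⟨k, -, hk⟩ := hprim
  have hdouble : ∀ x : List A, 2 * x.length ≤ ((Apply φ)^[k] x).length := by
    intro x
    rw [iterate_apply]
    exact mul_length_le_length_apply (fun a => two_le_length_of_forall_mem (hk a)) x
  have hpow : ∀ n a, 2 ^ n ≤ ((Apply φ)^[k * n] [a]).length := by
    intro n a
    induction n with
    | zero => simp
    | succ n ih =>
      rw [show k * (n + 1) = k + k * n by ring, Function.iterate_add_apply, pow_succ]
      have := hdouble ((Apply φ)^[k * n] [a])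
      omega
  exact ⟨k * N, fun a => Nat.lt_two_pow_self.le.trans (hpow N a)⟩

end Primitive

section FixedPoint

variable {φ : A → List A} {u : ℕ → A}

lemma IsFixedPoint.occursAt_zero_apply (hfix : IsFixedPoint φ u) {v : List A}
    (hv : OccursAt u v 0) : OccursAt u (Apply φ v) 0 := by
  have hv' : v = factorAt u 0 v.length := hv
  rw [hv']
  exact hfix v.length

lemma IsFixedPoint.occursAt_zero_iterate (hfix : IsFixedPoint φ u) (k : ℕ) {v : List A}
    (hv : OccursAt u v 0) : OccursAt u ((Apply φ)^[k] v) 0 := by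
  induction k with
  | zero => exact hv
  | succ k ih =>
    rw [Function.iterate_succ_apply']
    exact hfix.occursAt_zero_apply ih

lemma IsFixedPoint.apply_mem_lang (hfix : IsFixedPoint φ u) {v : List A} (hv : v ∈ Lang u) :
    Apply φ v ∈ Lang u := by
  obtain ⟨i, hi⟩ := hv
  have hpre : OccursAt u (factorAt u 0 i ++ v) 0 :=
    occursAt_append_iff.2 ⟨occursAt_factorAt .., by simpa using hi⟩
  have h := hfix.occursAt_zero_apply hpre
  rw [apply_append, occursAt_append_iff] at h
  exact ⟨_, h.2⟩

lemma IsFixedPoint.exists_pos_apply_eq_apply_zero (hfix : IsFixedPoint φ u)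
    (hprim : Primitive φ) :
    ∃ p, 0 < p ∧ u p = u 0 := by
  obtain ⟨k, -, hk⟩ := hprim
  have hpre : OccursAt u ([u 0] ++ [u 1]) 0 :=
    occursAt_append_iff.2 ⟨occursAt_singleton_iff.2 rfl, occursAt_singleton_iff.2 rfl⟩
  have h := hfix.occursAt_zero_iterate k hpre
  rw [iterate_apply_append, occursAt_append_iff] at h
  replace h := h.2
  obtain ⟨s, t, hst⟩ := List.append_of_mem (hk (u 1) (u 0))
  rw [hst, ← List.singleton_append, ← List.append_assoc, occursAt_append_iff,
    occursAt_append_iff, occursAt_singleton_iff] at h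
  have hpos := List.length_pos_of_mem (hk (u 0) (u 0))
  exact ⟨_, by omega, h.1.2⟩

lemma IsFixedPoint.exists_le_occursAt [Nontrivial A] (hfix : IsFixedPoint φ u)
    (hprim : Primitive φ) {x : List A} (hx : x ∈ Lang u) (m : ℕ) :
    ∃ j, m ≤ j ∧ OccursAt u x j := by
  obtain ⟨i, hi⟩ := hx
  obtain ⟨p, hp, hup⟩ := hfix.exists_pos_apply_eq_apply_zero hprim
  obtain ⟨q, rfl⟩ : ∃ q, p = 1 + q := ⟨p - 1, by omega⟩
  obtain ⟨n, hn⟩ := hprim.exists_le_length_iterate (m + i + x.length)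
  have hlong := hn (u 0)
  have hP : OccursAt u ((Apply φ)^[n] [u 0]) 0 :=
    hfix.occursAt_zero_iterate n (occursAt_singleton_iff.2 rfl)
  -- `u 0` recurs at position `p`, so the prefix `φⁿ(u 0)` recurs right after
  -- `φⁿ(u[0, p))`, which is at least as long
  have hpre : OccursAt u (factorAt u 0 (1 + q) ++ [u 0]) 0 :=
    occursAt_append_iff.2 ⟨occursAt_factorAt .., occursAt_singleton_iff.2 (by simpa using hup)⟩
  have hrec := hfix.occursAt_zero_iterate n hpre
  rw [iterate_apply_append, occursAt_append_iff] at hrec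
  have hstart : factorAt u 0 (1 + q) = [u 0] ++ factorAt u 1 q := by
    rw [factorAt_add]
    simp [factorAt]
  have hlen : ((Apply φ)^[n] [u 0]).length ≤ ((Apply φ)^[n] (factorAt u 0 (1 + q))).length := by
    rw [hstart, iterate_apply_append, List.length_append]
    omega
  exact ⟨_, by omega, hP.shift hrec.2 (by simpa using hi) (by omega)⟩

end FixedPoint

section Conjugates

variable {φL φR : A → List A} {v v' : List A}

lemma LeftConj.prefix_apply (h : LeftConj φL φR v) (hne : ∀ a, φL a ≠ []) {x : List A}
    (hlen : v.length ≤ x.length) : v <+: Apply φR x := by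
  refine List.prefix_of_append_eq (h.apply x) ?_
  have := congrArg List.length (h.apply x)
  have := length_le_length_apply hne x
  simp only [List.length_append] at *
  omega

/-- A second conjugate word `v ++ s` makes `s` commute with every `φL a`, so all `φL a` would
start with the first letter of `s`. -/
lemma LeftConj.eq_nil_of_append {s : List A} (h : LeftConj φL φR v)
    (h' : LeftConj φL φR (v ++ s)) (hne : ∀ a, φL a ≠ [])
    (hnc : ¬ ∀ a b, Fst φL a = Fst φL b) : s = [] := by
  by_contra hs
  have hcomm : ∀ a, φL a ++ s = s ++ φL a := fun a => List.append_cancel_left <| by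
    rw [← List.append_assoc, ← h a, List.append_assoc, h' a, List.append_assoc]
  have hfst : ∀ a, Fst φL a = s.head? := fun a => by
    rw [Fst, ← List.head?_append_of_ne_nil _ (hne a), hcomm a,
      List.head?_append_of_ne_nil _ hs]
  exact hnc fun a b => by rw [hfst a, hfst b]

lemma LeftConj.eq (h : LeftConj φL φR v) (h' : LeftConj φL φR v') (hne : ∀ a, φL a ≠ [])
    (hnc : ¬ ∀ a b, Fst φL a = Fst φL b) : v = v' := by
  obtain ⟨a, -⟩ : ∃ a b, Fst φL a ≠ Fst φL b := by simpa using hnc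
  let x := List.replicate (v.length + v'.length) a
  have hv := h.prefix_apply hne (x := x) (by simp [x])
  have hv' := h'.prefix_apply hne (x := x) (by simp [x])
  rcases List.prefix_or_prefix_of_prefix hv hv' with ⟨s, rfl⟩ | ⟨s, rfl⟩
  · simp [h.eq_nil_of_append h' hne hnc]
  · simp [h'.eq_nil_of_append h hne hnc]

end Conjugates

end ZDC

open ZDC in
theorem stmt_12_general {A : Type*} (φ φL φR : A → List A) (w : List A) (u : ℕ → A)
    (hprim : Primitive φ)
    (hLm : IsLeftmostConj φL φ) (hRm : IsRightmostConj φR φ)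
    (hfix : IsFixedPoint φ u)
    (hconj : LeftConj φL φR w) :
    ∀ x ∈ Lang u, Apply φR x ++ w ∈ Lang u := by
  obtain ⟨wL, hwL⟩ := hLm.1
  obtain ⟨wR, hwR⟩ := hRm.1
  have hne := hprim.apply_ne_nil
  have hLne : ∀ a, φL a ≠ [] := fun a => by
    rw [← List.length_pos_iff, hwL.length_eq]
    exact List.length_pos_iff.2 (hne a)
  have hw : w = wR ++ wL := hconj.eq (hwR.trans hwL) hLne hLm.2
  have : Nontrivial A := by
    obtain ⟨a, b, hab⟩ : ∃ a b, Fst φL a ≠ Fst φL b := by simpa using hLm.2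
    exact ⟨a, b, fun h => hab (h ▸ rfl)⟩
  intro x hx
  obtain ⟨j, hj, hxj⟩ := hfix.exists_le_occursAt hprim hx wR.length
  obtain ⟨z, z', hz, hz', hzxz'⟩ := hxj.exists_append_append_mem_lang wR.length wL.length hj
  have himg := hfix.apply_mem_lang hzxz'
  obtain ⟨t, ht⟩ := List.suffix_of_append_eq (hwR.apply z)
    (hz ▸ length_le_length_apply hne z)
  obtain ⟨t', ht'⟩ := List.prefix_of_append_eq (hwL.apply z')
    (hz' ▸ length_le_length_apply hne z')
  rw [hw, ← List.append_assoc, hwR.apply x]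
  refine mem_lang_of_infix himg ⟨t, t', ?_⟩
  rw [apply_append, apply_append, ← ht, ← ht']
  simp only [List.append_assoc]

open ZDC in
/-- Let `φ` be a primitive well-marked morphism with
`Fst(φL) = Lst(φR) = Id`, `u` a palindromic fixed point of `φ`, `w` the conjugate word of
`φL ▷ φR` and `Φ(x) = φR(x)w`. Then `x ∈ L(u)` implies `Φ(x) ∈ L(u)`. -/
theorem stmt_12 {A : Type*} [Fintype A] (φ φL φR : A → List A) (w : List A) (u : ℕ → A)
    (hprim : Primitive φ) (hacyclic : ¬ Cyclic φ)
    (hLm : IsLeftmostConj φL φ) (hRm : IsRightmostConj φR φ)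
    (hFst : ∀ a, Fst φL a = some a) (hLst : ∀ a, Lst φR a = some a)
    (hfix : IsFixedPoint φ u) (hpal : Palindromic u)
    (hconj : LeftConj φL φR w) :
    ∀ x ∈ Lang u, Apply φR x ++ w ∈ Lang u :=
  stmt_12_general φ φL φR w u hprim hLm hRm hfix hconj
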